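/- arXiv:1508.06091 — 2 statements merged into one kernel-verified Lean document; each statement's English description precedes it below -/
import Mathlib

section
/- Let n ≥ 2 and let Q : {1,…,n}² → [0,1]. Let ω be a subset of {1,…,n} with ω and its complement ω̄ both nonempty, let b ∈ ω and b' ∈ ω̄, and let ω' = (ω \ {b}) ∪ {b'} with complement ω̄' = (ω̄ \ {b'}) ∪ {b}. Then | (1/(|ω||ω̄|)) Σ_{p ∈ ω} Σ_{q ∈ ω̄} Q(p,q) − (1/(|ω'||ω̄'|)) Σ_{p ∈ ω'} Σ_{q ∈ ω̄'} Q(p,q) | ≤ (n−1)/(|ω||ω̄|). -/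
open Finset

/-- Stability of the normalized pairwise sum under swapping one positive item `b` with
one negative item `b'`: for `Q` with values in `[0,1]`, a set `ω` of positive items with
`ω` and its complement `ω̄` nonempty, and `ω' = (ω \ {b}) ∪ {b'}`,
`|(1/(|ω||ω̄|)) Σ_{p∈ω}Σ_{q∈ω̄} Q(p,q) − (1/(|ω'||ω̄'|)) Σ_{p∈ω'}Σ_{q∈ω̄'} Q(p,q)|
  ≤ (n−1)/(|ω||ω̄|)`. -/
theorem pairwise_sum_swap_stability (n : ℕ) (hn : 2 ≤ n)
    (Q : Fin n → Fin n → ℝ) (hQ : ∀ p q, Q p q ∈ Set.Icc (0 : ℝ) 1)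
    (ω : Finset (Fin n)) (hω : ω.Nonempty) (hωc : ωᶜ.Nonempty)
    (b b' : Fin n) (hb : b ∈ ω) (hb' : b' ∈ ωᶜ) :
    |(1 / ((ω.card : ℝ) * (ωᶜ.card : ℝ))) * ∑ p ∈ ω, ∑ q ∈ ωᶜ, Q p q -
        (1 / (((insert b' (ω.erase b)).card : ℝ) *
          (((insert b' (ω.erase b))ᶜ).card : ℝ))) *
        ∑ p ∈ insert b' (ω.erase b), ∑ q ∈ (insert b' (ω.erase b))ᶜ, Q p q| ≤
      ((n : ℝ) - 1) / ((ω.card : ℝ) * (ωᶜ.card : ℝ)) := by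
  have hb'ω : b' ∉ ω := Finset.mem_compl.mp hb'
  have hbωc : b ∉ ωᶜ := by simp [hb]
  have hne : b ≠ b' := fun h => hb'ω (h ▸ hb)
  set A := ω.erase b with hA
  set B := ωᶜ.erase b' with hBdef
  have hb'A : b' ∉ A := fun h => hb'ω (Finset.mem_of_mem_erase h)
  have hbB : b ∉ B := fun h => hbωc (Finset.mem_of_mem_erase h)
  have hk1 : 1 ≤ ω.card := Finset.card_pos.mpr hω
  have hl1 : 1 ≤ ωᶜ.card := Finset.card_pos.mpr hωc
  have hAcard : A.card = ω.card - 1 := Finset.card_erase_of_mem hb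
  have hBcard : B.card = ωᶜ.card - 1 := Finset.card_erase_of_mem hb'
  have hcard' : (insert b' A).card = ω.card := by
    rw [Finset.card_insert_of_notMem hb'A, hAcard]; omega
  have hcompl : (insert b' A)ᶜ = insert b B := by
    ext x
    simp only [hA, hBdef, Finset.mem_compl, Finset.mem_insert, Finset.mem_erase,
      not_or, not_and]
    constructor
    · rintro ⟨hxb', hx⟩
      by_cases hxb : x = b
      · exact Or.inl hxb
      · exact Or.inr ⟨hxb', hx hxb⟩
    · rintro (rfl | ⟨hxb', hx⟩)
      · exact ⟨hne, fun h => absurd rfl h⟩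
      · exact ⟨hxb', fun _ => hx⟩
  have hcomplcard : ((insert b' A)ᶜ).card = ωᶜ.card := by
    rw [hcompl, Finset.card_insert_of_notMem hbB, hBcard]; omega
  have hkl : ω.card + ωᶜ.card = n := by
    simpa using Finset.card_add_card_compl ω
  -- sum decompositions
  have hS : ∑ p ∈ ω, ∑ q ∈ ωᶜ, Q p q =
      (∑ p ∈ A, ∑ q ∈ B, Q p q) + (∑ p ∈ A, Q p b') + (∑ q ∈ B, Q b q) + Q b b' := by
    rw [← Finset.add_sum_erase ω _ hb]
    conv_lhs => rw [show (fun p => ∑ q ∈ ωᶜ, Q p q) = fun p => Q p b' + ∑ q ∈ B, Q p q from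
      funext fun p => (Finset.add_sum_erase ωᶜ (Q p) hb').symm]
    rw [← Finset.add_sum_erase ωᶜ (Q b) hb', Finset.sum_add_distrib]
    ring
  have hS' : ∑ p ∈ insert b' A, ∑ q ∈ (insert b' A)ᶜ, Q p q =
      (∑ p ∈ A, ∑ q ∈ B, Q p q) + (∑ p ∈ A, Q p b) + (∑ q ∈ B, Q b' q) + Q b' b := by
    rw [hcompl, Finset.sum_insert hb'A]
    conv_lhs => rw [show (fun p => ∑ q ∈ insert b B, Q p q) = fun p => Q p b + ∑ q ∈ B, Q p q from
      funext fun p => Finset.sum_insert hbB]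
    rw [Finset.sum_insert hbB, Finset.sum_add_distrib]
    ring
  have habs : ∀ x y : Fin n → Fin n → ℝ, True := fun _ _ => trivial
  have hone : ∀ p q r s : Fin n, |Q p q - Q r s| ≤ 1 := by
    intro p q r s
    have h1 := hQ p q; have h2 := hQ r s
    simp only [Set.mem_Icc] at h1 h2
    rw [abs_sub_le_iff]; constructor <;> linarith
  have hdiff : |(∑ p ∈ ω, ∑ q ∈ ωᶜ, Q p q) -
      ∑ p ∈ insert b' A, ∑ q ∈ (insert b' A)ᶜ, Q p q| ≤ (n : ℝ) - 1 := by
    rw [hS, hS']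
    have key : ((∑ p ∈ A, ∑ q ∈ B, Q p q) + (∑ p ∈ A, Q p b') + (∑ q ∈ B, Q b q) + Q b b') -
        ((∑ p ∈ A, ∑ q ∈ B, Q p q) + (∑ p ∈ A, Q p b) + (∑ q ∈ B, Q b' q) + Q b' b) =
        (∑ p ∈ A, (Q p b' - Q p b)) + (∑ q ∈ B, (Q b q - Q b' q)) + (Q b b' - Q b' b) := by
      rw [Finset.sum_sub_distrib, Finset.sum_sub_distrib]; ring
    rw [key]
    have h1 : |∑ p ∈ A, (Q p b' - Q p b)| ≤ (A.card : ℝ) := by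
      calc |∑ p ∈ A, (Q p b' - Q p b)| ≤ ∑ p ∈ A, |Q p b' - Q p b| :=
            Finset.abs_sum_le_sum_abs _ _
        _ ≤ ∑ _p ∈ A, (1 : ℝ) := Finset.sum_le_sum fun p _ => hone p b' p b
        _ = (A.card : ℝ) := by simp
    have h2 : |∑ q ∈ B, (Q b q - Q b' q)| ≤ (B.card : ℝ) := by
      calc |∑ q ∈ B, (Q b q - Q b' q)| ≤ ∑ q ∈ B, |Q b q - Q b' q| :=
            Finset.abs_sum_le_sum_abs _ _
        _ ≤ ∑ _q ∈ B, (1 : ℝ) := Finset.sum_le_sum fun q _ => hone b q b' q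
        _ = (B.card : ℝ) := by simp
    have h3 := hone b b' b' b
    have hcards : (A.card : ℝ) + (B.card : ℝ) + 1 = (n : ℝ) - 1 := by
      have : A.card + B.card + 2 = n := by omega
      push_cast [← this]; ring
    calc |(∑ p ∈ A, (Q p b' - Q p b)) + (∑ q ∈ B, (Q b q - Q b' q)) + (Q b b' - Q b' b)|
        ≤ |∑ p ∈ A, (Q p b' - Q p b)| + |∑ q ∈ B, (Q b q - Q b' q)| + |Q b b' - Q b' b| :=
          (abs_add_le _ _).trans (by gcongr; exact abs_add_le _ _)
      _ ≤ (A.card : ℝ) + (B.card : ℝ) + 1 := by gcongr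
      _ = (n : ℝ) - 1 := hcards
  -- finish
  rw [hcard', hcomplcard]
  have hpos : (0 : ℝ) < (ω.card : ℝ) * (ωᶜ.card : ℝ) := by
    have : (0:ℝ) < (ω.card : ℝ) := by exact_mod_cast hk1
    have : (0:ℝ) < (ωᶜ.card : ℝ) := by exact_mod_cast hl1
    positivity
  rw [← mul_sub, abs_mul, abs_of_pos (by positivity : (0:ℝ) < 1 / ((ω.card : ℝ) * (ωᶜ.card : ℝ)))]
  calc 1 / ((ω.card : ℝ) * (ωᶜ.card : ℝ)) *
        |∑ p ∈ ω, ∑ q ∈ ωᶜ, Q p q - ∑ p ∈ insert b' A, ∑ q ∈ (insert b' A)ᶜ, Q p q|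
      = |∑ p ∈ ω, ∑ q ∈ ωᶜ, Q p q - ∑ p ∈ insert b' A, ∑ q ∈ (insert b' A)ᶜ, Q p q| /
        ((ω.card : ℝ) * (ωᶜ.card : ℝ)) := by ring
    _ ≤ ((n : ℝ) - 1) / ((ω.card : ℝ) * (ωᶜ.card : ℝ)) := (div_le_div_iff_of_pos_right hpos).mpr hdiff
end

section
/- Let n ≥ 2 and m ≥ 1, and let 𝒬 be a nonempty family of functions Q : {1,…,m} × {1,…,n}² → [0,1]. For each user i ∈ {1,…,m} let ω_i ⊆ {1,…,n} have both ω_i and its complement ω̄_i nonempty, and define Ê_S[Q] = (1/m) Σ_{i=1}^m (1/(|ω_i||ω̄_i|)) Σ_{p ∈ ω_i} Σ_{q ∈ ω̄_i} Q(i, p, q). Let c : 𝒬 → ℝ be any bounded function (e.g. Q ↦ 𝔼_𝒟[Q]). Fix a user a, items b ∈ ω_a and b' ∈ ω̄_a, and let the modified sample Ŝ replace ω_a by ω_a' = (ω_a \ {b}) ∪ {b'}, leaving ω_i unchanged for i ≠ a. Then | sup_{Q ∈ 𝒬} (c(Q) − Ê_S[Q]) − sup_{Q ∈ 𝒬} (c(Q)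 − Ê_Ŝ[Q]) | ≤ (n−1)/(m |ω_a||ω̄_a|). -/
/-!
Swapping `b ∈ ω_a` with `b' ∈ ω̄_a` only changes the `a`-th summand of `Ê_S`, and leaves its
normalization `|ω_a||ω̄_a|` unchanged. Writing `ω_a = {b} ∪ T` and `ω̄_a = {b'} ∪ U`, the
pair sums over `ω_a × ω̄_a` and `ω_a' × ω̄_a'` share the block `T × U`; what is left of each
is a sum of `1 + |U| + |T| = n - 1` values in `[0, 1]`. Hence `Ê_S[Q]` and `Ê_Ŝ[Q]` differ by
at most `(n - 1)/(m|ω_a||ω̄_a|)` uniformly in `Q`, and a supremum moves by at most the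
uniform distance between the functions.
-/

open Finset

/-- The empirical AUC-type expectation
`Ê_S[Q] = (1/m) Σ_i (1/(|ω_i||ω̄_i|)) Σ_{p∈ω_i} Σ_{q∈ω̄_i} Q(i,p,q)`
of a function `Q` over the sample `S = (ω_1, …, ω_m)`. -/
noncomputable def empExp {m n : ℕ} (ω : Fin m → Finset (Fin n))
    (Q : Fin m → Fin n → Fin n → ℝ) : ℝ :=
  (1 / (m : ℝ)) * ∑ i, (1 / (((ω i).card : ℝ) * (((ω i)ᶜ).card : ℝ))) *
    ∑ p ∈ ω i, ∑ q ∈ (ω i)ᶜ, Q i p q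

theorem csSup_image_le_csSup_image_add {ι : Type*} {s : Set ι} (hs : s.Nonempty)
    {f g : ι → ℝ} (hg : BddAbove (g '' s)) {ε : ℝ} (h : ∀ x ∈ s, f x ≤ g x + ε) :
    sSup (f '' s) ≤ sSup (g '' s) + ε :=
  csSup_le (hs.image f) <| Set.forall_mem_image.2 fun x hx =>
    (h x hx).trans (add_le_add_left (le_csSup hg (Set.mem_image_of_mem g hx)) ε)

theorem abs_csSup_image_sub_csSup_image_le {ι : Type*} {s : Set ι} (hs : s.Nonempty)
    {f g : ι → ℝ} (hf : BddAbove (f '' s)) (hg : BddAbove (g '' s)) {ε : ℝ}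
    (h : ∀ x ∈ s, |f x - g x| ≤ ε) :
    |sSup (f '' s) - sSup (g '' s)| ≤ ε :=
  abs_sub_le_iff.2
    ⟨sub_le_iff_le_add'.2 <| csSup_image_le_csSup_image_add hs hg fun x hx =>
      sub_le_iff_le_add'.1 (abs_sub_le_iff.1 (h x hx)).1,
    sub_le_iff_le_add'.2 <| csSup_image_le_csSup_image_add hs hf fun x hx =>
      sub_le_iff_le_add'.1 (abs_sub_le_iff.1 (h x hx)).2⟩

theorem Finset.sum_insert_sum_insert {β M : Type*} [DecidableEq β] [AddCommMonoid M]
    {T U : Finset β} {x y : β} (hx : x ∉ T) (hy : y ∉ U) (f : β → β → M) :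
    ∑ p ∈ insert x T, ∑ q ∈ insert y U, f p q =
      (f x y + ∑ q ∈ U, f x q + ∑ p ∈ T, f p y) + ∑ p ∈ T, ∑ q ∈ U, f p q := by
  rw [sum_insert hx]
  simp_rw [sum_insert hy, sum_add_distrib]
  abel

theorem Finset.add_sum_add_sum_mem_Icc {β : Type*} {f : β → β → ℝ}
    (hf : ∀ p q, f p q ∈ Set.Icc 0 1) (T U : Finset β) (x y : β) :
    f x y + ∑ q ∈ U, f x q + ∑ p ∈ T, f p y ∈ Set.Icc (0 : ℝ) (1 + #U + #T) := by
  have hU : ∑ q ∈ U, f x q ≤ #U := by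
    simpa using sum_le_card_nsmul U _ 1 fun q _ => (hf x q).2
  have hT : ∑ p ∈ T, f p y ≤ #T := by
    simpa using sum_le_card_nsmul T _ 1 fun p _ => (hf p y).2
  have hU₀ : 0 ≤ ∑ q ∈ U, f x q := sum_nonneg fun q _ => (hf x q).1
  have hT₀ : 0 ≤ ∑ p ∈ T, f p y := sum_nonneg fun p _ => (hf p y).1
  constructor <;> linarith [(hf x y).1, (hf x y).2]

section Swap

variable {α : Type*} [DecidableEq α] {s : Finset α} {b b' : α}

theorem Finset.card_insert_erase_swap (hb : b ∈ s) (hb' : b' ∉ s) :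
    #(insert b' (s.erase b)) = #s := by
  rw [card_insert_of_notMem fun h => hb' (mem_of_mem_erase h), card_erase_of_mem hb,
    Nat.sub_add_cancel (card_pos.2 ⟨b, hb⟩)]

variable [Fintype α]

theorem Finset.compl_insert_erase_swap (hb : b ∈ s) (hb' : b' ∉ s) :
    (insert b' (s.erase b))ᶜ = insert b (sᶜ.erase b') := by
  ext x
  simp only [mem_compl, mem_insert, mem_erase]
  by_cases h1 : x = b <;> by_cases h2 : x = b' <;> simp_all

theorem Finset.card_compl_insert_erase_swap (hb : b ∈ s) (hb' : b' ∉ s) :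
    #(insert b' (s.erase b))ᶜ = #sᶜ := by
  rw [compl_insert_erase_swap hb hb',
    card_insert_erase_swap (mem_compl.2 hb') (notMem_compl.2 hb)]

theorem Finset.abs_sum_sum_compl_sub_swap_le {f : α → α → ℝ}
    (hf : ∀ p q, f p q ∈ Set.Icc 0 1) (hb : b ∈ s) (hb' : b' ∉ s) :
    |∑ p ∈ s, ∑ q ∈ sᶜ, f p q -
        ∑ p ∈ insert b' (s.erase b), ∑ q ∈ (insert b' (s.erase b))ᶜ, f p q| ≤
      Fintype.card α - 1 := by
  have hb'c : b' ∈ sᶜ := mem_compl.2 hb'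
  set T := s.erase b
  set U := sᶜ.erase b'
  have hS : ∑ p ∈ s, ∑ q ∈ sᶜ, f p q =
      (f b b' + ∑ q ∈ U, f b q + ∑ p ∈ T, f p b') + ∑ p ∈ T, ∑ q ∈ U, f p q := by
    rw [← sum_insert_sum_insert (notMem_erase b s) (notMem_erase b' sᶜ),
      insert_erase hb, insert_erase hb'c]
  have hS' : ∑ p ∈ insert b' T, ∑ q ∈ (insert b' T)ᶜ, f p q =
      (f b' b + ∑ q ∈ U, f b' q + ∑ p ∈ T, f p b) + ∑ p ∈ T, ∑ q ∈ U, f p q := by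
    rw [compl_insert_erase_swap hb hb',
      sum_insert_sum_insert (fun h => hb' (mem_of_mem_erase h))
        (fun h => mem_compl.1 (mem_of_mem_erase h) hb)]
  have hcard : 1 + #U + #T + 1 = Fintype.card α := by
    rw [card_erase_of_mem hb, card_erase_of_mem hb'c, ← card_add_card_compl s]
    have := card_pos.2 ⟨b, hb⟩
    have := card_pos.2 ⟨b', hb'c⟩
    omega
  have hn : (1 + #U + #T : ℝ) = Fintype.card α - 1 := by
    rw [← hcard]; push_cast; ring
  obtain ⟨h₀, h₁⟩ := add_sum_add_sum_mem_Icc hf T U b b'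
  obtain ⟨h₀', h₁'⟩ := add_sum_add_sum_mem_Icc hf T U b' b
  rw [hS, hS', add_sub_add_right_eq_sub, ← hn]
  exact abs_sub_le_of_nonneg_of_le h₀ h₁ h₀' h₁'

end Swap

section EmpExp

variable {m n : ℕ}

theorem empExp_nonneg (ω : Fin m → Finset (Fin n)) {Q : Fin m → Fin n → Fin n → ℝ}
    (hQ : ∀ i p q, 0 ≤ Q i p q) : 0 ≤ empExp ω Q :=
  mul_nonneg (by positivity) <| sum_nonneg fun i _ => mul_nonneg (by positivity) <|
    sum_nonneg fun p _ => sum_nonneg fun q _ => hQ i p q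

theorem empExp_sub_empExp_update (ω : Fin m → Finset (Fin n))
    (Q : Fin m → Fin n → Fin n → ℝ) (a : Fin m) {t : Finset (Fin n)}
    (ht : #t = #(ω a)) (htc : #tᶜ = #(ω a)ᶜ) :
    empExp ω Q - empExp (Function.update ω a t) Q =
      (∑ p ∈ ω a, ∑ q ∈ (ω a)ᶜ, Q a p q - ∑ p ∈ t, ∑ q ∈ tᶜ, Q a p q) /
        (m * #(ω a) * #(ω a)ᶜ) := by
  unfold empExp
  rw [← mul_sub, ← sum_sub_distrib,
    sum_eq_single a (fun i _ hi => by rw [Function.update_of_ne hi, sub_self]) (by simp),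
    Function.update_self, ht, htc]
  ring

theorem abs_empExp_sub_empExp_swap_le {ω : Fin m → Finset (Fin n)}
    {Q : Fin m → Fin n → Fin n → ℝ} (hQ : ∀ i p q, Q i p q ∈ Set.Icc (0 : ℝ) 1)
    {a : Fin m} {b b' : Fin n} (hb : b ∈ ω a) (hb' : b' ∈ (ω a)ᶜ) :
    |empExp ω Q - empExp (Function.update ω a (insert b' ((ω a).erase b))) Q| ≤
      ((n : ℝ) - 1) / ((m : ℝ) * #(ω a) * #(ω a)ᶜ) := by
  have hb'' : b' ∉ ω a := mem_compl.1 hb'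
  rw [empExp_sub_empExp_update ω Q a (card_insert_erase_swap hb hb'')
      (card_compl_insert_erase_swap hb hb''), abs_div,
    abs_of_nonneg (by positivity : (0 : ℝ) ≤ m * #(ω a) * #(ω a)ᶜ)]
  gcongr
  exact (abs_sum_sum_compl_sub_swap_le (hQ a) hb hb'').trans_eq (by rw [Fintype.card_fin])

end EmpExp

theorem sup_diff_swap_stability_general (m n : ℕ)
    (𝒬 : Set (Fin m → Fin n → Fin n → ℝ)) (h𝒬 : 𝒬.Nonempty)
    (hrange : ∀ Q ∈ 𝒬, ∀ i p q, Q i p q ∈ Set.Icc (0 : ℝ) 1)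
    (c : (Fin m → Fin n → Fin n → ℝ) → ℝ)
    (hc : ∃ C : ℝ, ∀ Q ∈ 𝒬, |c Q| ≤ C)
    (ω : Fin m → Finset (Fin n))
    (a : Fin m) (b b' : Fin n) (hb : b ∈ ω a) (hb' : b' ∈ (ω a)ᶜ) :
    |sSup ((fun Q => c Q - empExp ω Q) '' 𝒬) -
        sSup ((fun Q => c Q -
          empExp (Function.update ω a (insert b' ((ω a).erase b))) Q) '' 𝒬)| ≤
      ((n : ℝ) - 1) / ((m : ℝ) * ((ω a).card : ℝ) * (((ω a)ᶜ).card : ℝ)) := by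
  obtain ⟨C, hC⟩ := hc
  have hbdd : ∀ ω' : Fin m → Finset (Fin n),
      BddAbove ((fun Q => c Q - empExp ω' Q) '' 𝒬) := fun ω' =>
    ⟨C, Set.forall_mem_image.2 fun Q hQ => by
      linarith [(abs_le.1 (hC Q hQ)).2, empExp_nonneg ω' fun i p q => (hrange Q hQ i p q).1]⟩
  refine abs_csSup_image_sub_csSup_image_le h𝒬 (hbdd _) (hbdd _) fun Q hQ => ?_
  rw [sub_sub_sub_cancel_left, abs_sub_comm]
  exact abs_empExp_sub_empExp_swap_le (hrange Q hQ) hb hb'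

/-- Bounded-difference property of the supremum of `c(Q) − Ê_S[Q]`: replacing in the
sample the positive set `ω_a` by `ω_a' = (ω_a \ {b}) ∪ {b'}` (for `b ∈ ω_a`,
`b' ∈ ω̄_a`) changes `sup_{Q∈𝒬}(c(Q) − Ê_S[Q])` by at most `(n−1)/(m|ω_a||ω̄_a|)`. -/
theorem sup_diff_swap_stability (m n : ℕ) (hm : 1 ≤ m) (hn : 2 ≤ n)
    (𝒬 : Set (Fin m → Fin n → Fin n → ℝ)) (h𝒬 : 𝒬.Nonempty)
    (hrange : ∀ Q ∈ 𝒬, ∀ i p q, Q i p q ∈ Set.Icc (0 : ℝ) 1)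
    (c : (Fin m → Fin n → Fin n → ℝ) → ℝ)
    (hc : ∃ C : ℝ, ∀ Q ∈ 𝒬, |c Q| ≤ C)
    (ω : Fin m → Finset (Fin n))
    (hω : ∀ i, (ω i).Nonempty) (hωc : ∀ i, ((ω i)ᶜ).Nonempty)
    (a : Fin m) (b b' : Fin n) (hb : b ∈ ω a) (hb' : b' ∈ (ω a)ᶜ) :
    |sSup ((fun Q => c Q - empExp ω Q) '' 𝒬) -
        sSup ((fun Q => c Q -
          empExp (Function.update ω a (insert b' ((ω a).erase b))) Q) '' 𝒬)| ≤
      ((n : ℝ) - 1) / ((m : ℝ) * ((ω a).card : ℝ) * (((ω a)ᶜ).card : ℝ)) :=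
  sup_diff_swap_stability_general m n 𝒬 h𝒬 hrange c hc ω a b b' hb hb'
end
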